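/- arXiv:1408.6667 — 2 statements merged into one kernel-verified Lean document; each statement's English description precedes it below -/
import Mathlib

section
/- If X is a normal random variable with mean μ and variance σ² (σ > 0), then E[min{1, e^X}] = Φ(μ/σ) + exp(μ + σ²/2) · Φ(−σ − μ/σ), where Φ is the standard normal cumulative distribution function. -/
/-!
Split the expectation at `x = 0`. For `x > 0` the integrand is the `N(μ, σ²)` density, whose mass
on `(0, ∞)` is `Φ(μ/σ)`. For `x ≤ 0` it is `e^x` times that density, and completing the square
turns this into `e^{μ + σ²/2}` times the `N(μ + σ², σ²)` density, whose mass on `(-∞, 0]` is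
`Φ(-σ - μ/σ)`.
-/

open Real MeasureTheory

/-- The standard normal CDF `Φ`. -/
noncomputable def stdNormalCDF (t : ℝ) : ℝ :=
  ∫ u in Set.Iic t, (Real.sqrt (2 * Real.pi))⁻¹ * Real.exp (-u ^ 2 / 2)

open Set

noncomputable def gaussianDensity (m σ x : ℝ) : ℝ :=
  (σ * √(2 * π))⁻¹ * exp (-(x - m) ^ 2 / (2 * σ ^ 2))

lemma integrable_gaussianDensity (m σ : ℝ) : Integrable (gaussianDensity m σ) := by
  rcases eq_or_ne σ 0 with rfl | hσ
  · rw [show gaussianDensity m 0 = 0 from funext fun x => by simp [gaussianDensity]]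
    exact integrable_zero _ _ _
  have hexp := (integrable_exp_neg_mul_sq (b := (2 * σ ^ 2)⁻¹) (by positivity)).comp_sub_right m
  refine (hexp.const_mul (σ * √(2 * π))⁻¹).congr (ae_of_all _ fun x => ?_)
  simp only [gaussianDensity]
  ring_nf

lemma gaussianDensity_neg (m σ x : ℝ) :
    gaussianDensity m σ (-x) = gaussianDensity (-m) σ x := by
  simp only [gaussianDensity]
  ring_nf

lemma gaussianDensity_mul_add {σ : ℝ} (hσ : σ ≠ 0) (m u : ℝ) :
    gaussianDensity m σ (σ * u + m) = σ⁻¹ * ((√(2 * π))⁻¹ * exp (-u ^ 2 / 2)) := by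
  simp only [gaussianDensity, add_sub_cancel_right, mul_inv, mul_assoc]
  congr 3
  field_simp

lemma integral_comp_mul_add_Iic {E : Type*} [NormedAddCommGroup E] [NormedSpace ℝ E]
    (f : ℝ → E) {σ : ℝ} (hσ : 0 < σ) (m c : ℝ) :
    ∫ u in Iic ((c - m) / σ), f (σ * u + m) = σ⁻¹ • ∫ x in Iic c, f x := by
  have hpre : (fun u => σ * u + m) ⁻¹' Iic c = Iic ((c - m) / σ) := by
    ext u
    simp [le_div_iff₀ hσ, mul_comm, le_sub_iff_add_le]
  rw [← integral_indicator measurableSet_Iic, ← integral_indicator measurableSet_Iic, ← hpre]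
  calc ∫ u, ((fun u => σ * u + m) ⁻¹' Iic c).indicator (fun u => f (σ * u + m)) u
      = ∫ u, (Iic c).indicator f (σ * u + m) := by simp_rw [← indicator_comp_right]; rfl
    _ = |σ⁻¹| • ∫ x, (Iic c).indicator f (x + m) :=
      Measure.integral_comp_mul_left (fun x => (Iic c).indicator f (x + m)) σ
    _ = σ⁻¹ • ∫ x, (Iic c).indicator f x := by
      rw [abs_of_pos (inv_pos.2 hσ), integral_add_right_eq_self]

lemma setIntegral_gaussianDensity_Iic {σ : ℝ} (hσ : 0 < σ) (m c : ℝ) :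
    ∫ x in Iic c, gaussianDensity m σ x = stdNormalCDF ((c - m) / σ) := by
  have h := integral_comp_mul_add_Iic (gaussianDensity m σ) hσ m c
  simp only [gaussianDensity_mul_add hσ.ne', integral_const_mul, smul_eq_mul] at h
  rw [stdNormalCDF, integral_const_mul]
  exact (mul_right_injective₀ (inv_ne_zero hσ.ne') h).symm

lemma setIntegral_gaussianDensity_Ioi {σ : ℝ} (hσ : 0 < σ) (m c : ℝ) :
    ∫ x in Ioi c, gaussianDensity m σ x = stdNormalCDF ((m - c) / σ) := by
  rw [← neg_neg c, ← integral_comp_neg_Iic]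
  simp only [gaussianDensity_neg, setIntegral_gaussianDensity_Iic hσ]
  ring_nf

lemma exp_mul_gaussianDensity (m σ x : ℝ) :
    exp x * gaussianDensity m σ x = exp (m + σ ^ 2 / 2) * gaussianDensity (m + σ ^ 2) σ x := by
  rcases eq_or_ne σ 0 with rfl | hσ
  · simp [gaussianDensity]
  simp only [gaussianDensity, mul_left_comm (exp _), ← exp_add]
  congr 2
  field_simp
  ring

/-- If `X ~ N(μ, σ²)` then `E[min{1, e^X}] = Φ(μ/σ) + e^{μ+σ²/2} Φ(−σ−μ/σ)`. -/
theorem gaussian_min_exp_expectation (μ σ : ℝ) (hσ : 0 < σ) :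
    (∫ x : ℝ, min 1 (Real.exp x) *
        ((σ * Real.sqrt (2 * Real.pi))⁻¹ * Real.exp (-(x - μ) ^ 2 / (2 * σ ^ 2))))
      = stdNormalCDF (μ / σ) + Real.exp (μ + σ ^ 2 / 2) * stdNormalCDF (-σ - μ / σ) := by
  change ∫ x, min 1 (exp x) * gaussianDensity μ σ x = _
  have hint : Integrable fun x => min 1 (exp x) * gaussianDensity μ σ x :=
    (integrable_gaussianDensity μ σ).bdd_mul (by fun_prop) (ae_of_all _ fun x => by
      rw [norm_of_nonneg (by positivity)]
      exact min_le_left _ _)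
  have hIic : ∫ x in Iic 0, min 1 (exp x) * gaussianDensity μ σ x
      = exp (μ + σ ^ 2 / 2) * stdNormalCDF (-σ - μ / σ) := by
    rw [setIntegral_congr_fun measurableSet_Iic fun x (hx : x ≤ 0) => by
      rw [min_eq_right (exp_le_one_iff.2 hx), exp_mul_gaussianDensity], integral_const_mul,
      setIntegral_gaussianDensity_Iic hσ]
    congr 2
    field_simp
    ring
  have hIoi : ∫ x in Ioi 0, min 1 (exp x) * gaussianDensity μ σ x = stdNormalCDF (μ / σ) := by
    rw [setIntegral_congr_fun measurableSet_Ioi fun x (hx : 0 < x) => by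
      rw [min_eq_left (one_le_exp hx.le), one_mul], setIntegral_gaussianDensity_Ioi hσ, sub_zero]
  rw [← intervalIntegral.integral_Iic_add_Ioi hint.integrableOn hint.integrableOn, hIic, hIoi,
    add_comm]
end

section
/- For any σ > 0, the identity E[min{1, e^X}] = 2Φ(−σ/2) holds when X ~ N(−σ²/2, σ²), where Φ is the standard normal CDF. -/
/-!
Completing the square shows that the density `p` of `N(-σ²/2, σ²)` satisfies `eˣ p(x) = p(-x)`.
So the part of `E[min{1, e^X}]` over `x ≤ 0`, namely `∫_{x ≤ 0} eˣ p(x) dx`, is the mirror image of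
`∫_{x > 0} p(x) dx`, and the expectation is `2 P(X > 0) = 2Φ(-σ/2)`.
-/

open Real MeasureTheory

open Set

noncomputable def stdNormalPDF (u : ℝ) : ℝ :=
  (√(2 * π))⁻¹ * exp (-u ^ 2 / 2)

/-- The density of `N(m, σ²)` for `σ > 0`, parametrized by the standard deviation. -/
noncomputable def normalPDF (m σ x : ℝ) : ℝ :=
  σ⁻¹ * stdNormalPDF ((x - m) / σ)

lemma stdNormalCDF_eq_integral (t : ℝ) : stdNormalCDF t = ∫ u in Iic t, stdNormalPDF u := rfl

lemma integrable_stdNormalPDF : Integrable stdNormalPDF := by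
  refine ((integrable_exp_neg_mul_sq (b := 1 / 2) (by norm_num)).const_mul (√(2 * π))⁻¹).congr
    (ae_of_all _ fun u => ?_)
  simp only [stdNormalPDF]
  ring_nf

lemma integrable_normalPDF (m : ℝ) {σ : ℝ} (hσ : σ ≠ 0) : Integrable (normalPDF m σ) :=
  ((integrable_stdNormalPDF.comp_div hσ).comp_sub_right m).const_mul _

lemma normalPDF_eq {σ : ℝ} (hσ : σ ≠ 0) (m x : ℝ) :
    normalPDF m σ x = (σ * √(2 * π))⁻¹ * exp (-(x - m) ^ 2 / (2 * σ ^ 2)) := by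
  rw [normalPDF, stdNormalPDF, mul_inv, mul_assoc]
  congr 3
  field_simp

lemma normalPDF_neg (m σ x : ℝ) : normalPDF m σ (-x) = normalPDF (-m) σ x := by
  simp only [normalPDF, stdNormalPDF]
  ring_nf

lemma exp_mul_normalPDF_neg_half_sq {σ : ℝ} (hσ : σ ≠ 0) (x : ℝ) :
    exp x * normalPDF (-(σ ^ 2 / 2)) σ x = normalPDF (-(σ ^ 2 / 2)) σ (-x) := by
  simp only [normalPDF, stdNormalPDF]
  rw [mul_left_comm, mul_left_comm (exp x), ← exp_add]
  congr 3
  field_simp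
  ring

lemma integral_Iic_comp_sub_div {E : Type*} [NormedAddCommGroup E] [NormedSpace ℝ E]
    (f : ℝ → E) (a m : ℝ) {σ : ℝ} (hσ : 0 < σ) :
    ∫ x in Iic a, f ((x - m) / σ) = σ • ∫ u in Iic ((a - m) / σ), f u := by
  rw [← integral_indicator measurableSet_Iic, ← integral_indicator measurableSet_Iic]
  have hpre : (fun x => (x - m) / σ) ⁻¹' Iic ((a - m) / σ) = Iic a := by
    ext x
    simp [div_le_div_iff_of_pos_right hσ]
  calc ∫ x, (Iic a).indicator (fun x => f ((x - m) / σ)) x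
      = ∫ x, (Iic ((a - m) / σ)).indicator f ((x - m) / σ) := by
        rw [← hpre]
        exact integral_congr_ae (ae_of_all _ fun _ => indicator_comp_right _)
    _ = ∫ x, (Iic ((a - m) / σ)).indicator f (x / σ) :=
        integral_sub_right_eq_self (fun x => (Iic ((a - m) / σ)).indicator f (x / σ)) m
    _ = σ • ∫ u, (Iic ((a - m) / σ)).indicator f u := by
        rw [Measure.integral_comp_div, abs_of_pos hσ]

lemma integral_Iic_normalPDF (a m : ℝ) {σ : ℝ} (hσ : 0 < σ) :
    ∫ x in Iic a, normalPDF m σ x = stdNormalCDF ((a - m) / σ) := by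
  simp only [normalPDF]
  rw [integral_const_mul, integral_Iic_comp_sub_div _ _ _ hσ, smul_eq_mul,
    inv_mul_cancel_left₀ hσ.ne', stdNormalCDF_eq_integral]

lemma integral_Ioi_normalPDF (a m : ℝ) {σ : ℝ} (hσ : 0 < σ) :
    ∫ x in Ioi a, normalPDF m σ x = stdNormalCDF ((m - a) / σ) := by
  rw [← neg_neg a, ← integral_comp_neg_Iic]
  simp only [normalPDF_neg]
  rw [integral_Iic_normalPDF _ _ hσ, neg_sub_neg, neg_neg]

lemma integral_min_one_exp_mul {p : ℝ → ℝ} (hp : Integrable p)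
    (hsymm : ∀ x, exp x * p x = p (-x)) :
    ∫ x, min 1 (exp x) * p x = 2 * ∫ x in Ioi 0, p x := by
  have hint : Integrable fun x => min 1 (exp x) * p x := by
    refine hp.bdd_mul (c := 1) (by fun_prop) (ae_of_all _ fun x => ?_)
    rw [norm_of_nonneg (le_min zero_le_one (exp_pos x).le)]
    exact min_le_left _ _
  have hneg : ∫ x in Iic 0, min 1 (exp x) * p x = ∫ x in Ioi 0, p x := by
    calc ∫ x in Iic 0, min 1 (exp x) * p x = ∫ x in Iic 0, p (-x) :=
          setIntegral_congr_fun measurableSet_Iic fun x (hx : x ≤ 0) => by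
            rw [min_eq_right (exp_le_one_iff.mpr hx), hsymm]
      _ = ∫ x in Ioi 0, p x := by rw [integral_comp_neg_Iic, neg_zero]
  have hpos : ∫ x in Ioi 0, min 1 (exp x) * p x = ∫ x in Ioi 0, p x :=
    setIntegral_congr_fun measurableSet_Ioi fun x (hx : 0 < x) => by
      rw [min_eq_left (one_le_exp hx.le), one_mul]
  rw [← integral_add_compl measurableSet_Iic hint, compl_Iic, hneg, hpos, two_mul]

/-- If `X ~ N(−σ²/2, σ²)` with `σ > 0`, then `E[min{1, e^X}] = 2Φ(−σ/2)`. -/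
theorem gaussian_min_exp_expectation_stationary (σ : ℝ) (hσ : 0 < σ) :
    (∫ x : ℝ, min 1 (Real.exp x) *
        ((σ * Real.sqrt (2 * Real.pi))⁻¹ *
          Real.exp (-(x + σ ^ 2 / 2) ^ 2 / (2 * σ ^ 2))))
      = 2 * stdNormalCDF (-σ / 2) := by
  calc _ = ∫ x, min 1 (exp x) * normalPDF (-(σ ^ 2 / 2)) σ x := by
        simp_rw [normalPDF_eq hσ.ne', sub_neg_eq_add]
    _ = 2 * ∫ x in Ioi 0, normalPDF (-(σ ^ 2 / 2)) σ x :=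
        integral_min_one_exp_mul (integrable_normalPDF _ hσ.ne')
          (exp_mul_normalPDF_neg_half_sq hσ.ne')
    _ = 2 * stdNormalCDF (-σ / 2) := by
        rw [integral_Ioi_normalPDF _ _ hσ]
        congr 2
        field_simp
        ring
end
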